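/- arXiv:1503.05243 — 2 statements merged into one kernel-verified Lean document; each statement's English description precedes it below -/
import Mathlib

section
/- Let (K,|·|) be a normed field, n ≥ 2, u, v ∈ Kⁿ, and 1 ≤ p ≤ ∞ with conjugate exponent q. If v has pairwise distinct components and ‖(u − v)/d(v)‖_p < 1/2^{1/q}, then u also has pairwise distinct components. -/
open Finset Filter Topology
open scoped ENNReal

noncomputable def pnorm {n : ℕ} (p : ℝ≥0∞) (v : Fin n → ℝ) : ℝ :=
  if p = ⊤ then ⨆ i, |v i| else (∑ i, |v i| ^ p.toReal) ^ (1 / p.toReal)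

noncomputable def epow (a : ℝ) (p : ℝ≥0∞) : ℝ :=
  if p = ⊤ then 1 else a ^ (1 / p.toReal)

noncomputable def dsep {K : Type*} [NormedField K] {n : ℕ} (x : Fin n → K) (i : Fin n) : ℝ :=
  sInf {r : ℝ | ∃ j, j ≠ i ∧ r = ‖x i - x j‖}

noncomputable def Wcorr {K : Type*} [NormedField K] {n : ℕ} (f : Polynomial K)
    (x : Fin n → K) (i : Fin n) : K :=
  Polynomial.eval (x i) f / (f.leadingCoeff * ∏ j ∈ Finset.univ.erase i, (x i - x j))

def IsRootVector {K : Type*} [NormedField K] {n : ℕ} (f : Polynomial K) (ξ : Fin n → K) : Prop :=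
  ∀ z : K, Polynomial.eval z f = f.leadingCoeff * ∏ i, (z - ξ i)

/-! If `u i = u j` with `i ≠ j`, the triangle inequality through `u i` gives
`‖v i - v j‖ ≤ ‖u i - v i‖ + ‖u j - v j‖`; since `d_i(v), d_j(v) ≤ ‖v i - v j‖`, the coordinates
`a_i, a_j` of `a = (u - v)/d(v)` satisfy `a_i + a_j ≥ 1`. Hölder's inequality on these two
coordinates gives `a_i + a_j ≤ 2^{1/q} ‖a‖_p < 1`. -/

theorem epow_eq_rpow (a : ℝ) (q : ℝ≥0∞) : epow a q = a ^ (1 / q.toReal) := by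
  by_cases hq : q = ⊤ <;> simp [epow, hq]

theorem one_div_toReal_add_one_div_toReal {p q : ℝ≥0∞} (hpq : 1 / p + 1 / q = 1) :
    1 / p.toReal + 1 / q.toReal = 1 := by
  have hfin : 1 / p + 1 / q ≠ ⊤ := by rw [hpq]; exact ENNReal.one_ne_top
  have := congrArg ENNReal.toReal hpq
  rwa [ENNReal.toReal_add (ENNReal.add_ne_top.1 hfin).1 (ENNReal.add_ne_top.1 hfin).2,
    one_div, one_div, ENNReal.toReal_inv, ENNReal.toReal_inv, ENNReal.toReal_one,
    ← one_div, ← one_div] at this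

section PNorm

variable {n : ℕ} {p : ℝ≥0∞}

theorem pnorm_of_ne_top (hp : p ≠ ⊤) (a : Fin n → ℝ) :
    pnorm p a = (∑ k, |a k| ^ p.toReal) ^ (1 / p.toReal) := by
  simp [pnorm, hp]

theorem abs_le_pnorm_top (a : Fin n → ℝ) (i : Fin n) : |a i| ≤ pnorm ⊤ a := by
  simpa [pnorm] using le_ciSup (Set.finite_range fun k => |a k|).bddAbove i

/-- Hölder's inequality for `(a i, a j)` against `(1, 1)`, whose `q`-norm is `2^{1/q}`. -/
theorem abs_add_abs_le_epow_mul_pnorm {q : ℝ≥0∞} (hp : 1 ≤ p) (hpq : 1 / p + 1 / q = 1)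
    (a : Fin n → ℝ) {i j : Fin n} (hij : i ≠ j) :
    |a i| + |a j| ≤ epow 2 q * pnorm p a := by
  have hq := one_div_toReal_add_one_div_toReal hpq
  rw [epow_eq_rpow]
  by_cases hpt : p = ⊤
  · subst hpt
    have hq1 : 1 / q.toReal = 1 := by simpa using hq
    rw [hq1, Real.rpow_one]
    linarith [abs_le_pnorm_top a i, abs_le_pnorm_top a j]
  set r := p.toReal
  have hr : 1 ≤ r := by
    simpa using ENNReal.toReal_mono hpt hp
  have hr0 : 0 < r := by linarith
  have hpair : (|a i| + |a j|) ^ r ≤ 2 ^ (r - 1) * ∑ k, |a k| ^ r := by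
    have hsum := Real.rpow_sum_le_const_mul_sum_rpow {i, j} a hr
    rw [sum_pair hij, sum_pair hij, card_pair hij, Nat.cast_two] at hsum
    refine hsum.trans (mul_le_mul_of_nonneg_left ?_ (by positivity))
    rw [← sum_pair (f := fun k => |a k| ^ r) hij]
    exact sum_le_sum_of_subset_of_nonneg (subset_univ _) fun k _ _ => by positivity
  calc |a i| + |a j| = ((|a i| + |a j|) ^ r) ^ (1 / r) := by
        rw [← Real.rpow_mul (by positivity), mul_one_div_cancel hr0.ne', Real.rpow_one]
    _ ≤ (2 ^ (r - 1) * ∑ k, |a k| ^ r) ^ (1 / r) :=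
        Real.rpow_le_rpow (by positivity) hpair (by positivity)
    _ = 2 ^ (1 / q.toReal) * pnorm p a := by
        rw [pnorm_of_ne_top hpt, Real.mul_rpow (by positivity) (by positivity),
          ← Real.rpow_mul (by norm_num), show 1 / q.toReal = 1 - 1 / r by linarith]
        congr 2
        field_simp

end PNorm

section Separation

variable {K : Type*} [NormedField K] {n : ℕ}

theorem dsep_set_finite (v : Fin n → K) (i : Fin n) :
    {r : ℝ | ∃ j, j ≠ i ∧ r = ‖v i - v j‖}.Finite :=
  (Set.finite_range fun k => ‖v i - v k‖).subset (by rintro r ⟨k, _, rfl⟩; exact ⟨k, rfl⟩)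

theorem dsep_le (v : Fin n → K) {i j : Fin n} (hji : j ≠ i) : dsep v i ≤ ‖v i - v j‖ :=
  csInf_le (dsep_set_finite v i).bddBelow ⟨j, hji, rfl⟩

theorem dsep_pos {v : Fin n → K} (hv : Function.Injective v) {i j : Fin n} (hji : j ≠ i) :
    0 < dsep v i := by
  have hne : {r : ℝ | ∃ k, k ≠ i ∧ r = ‖v i - v k‖}.Nonempty := ⟨_, j, hji, rfl⟩
  obtain ⟨k, hki, hk⟩ := hne.csInf_mem (dsep_set_finite v i)
  rw [dsep, hk]
  exact norm_pos_iff.2 (sub_ne_zero.2 (hv.ne hki.symm))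

theorem one_le_add_div_dsep_of_eq {u v : Fin n → K} (hv : Function.Injective v) {i j : Fin n}
    (hij : i ≠ j) (hu : u i = u j) :
    1 ≤ ‖u i - v i‖ / dsep v i + ‖u j - v j‖ / dsep v j := by
  have hD : 0 < ‖v i - v j‖ := norm_pos_iff.2 (sub_ne_zero.2 (hv.ne hij))
  have hi : ‖u i - v i‖ / ‖v i - v j‖ ≤ ‖u i - v i‖ / dsep v i :=
    div_le_div_of_nonneg_left (norm_nonneg _) (dsep_pos hv hij.symm) (dsep_le v hij.symm)
  have hj : ‖u j - v j‖ / ‖v i - v j‖ ≤ ‖u j - v j‖ / dsep v j := by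
    rw [norm_sub_rev (v i)]
    exact div_le_div_of_nonneg_left (norm_nonneg _) (dsep_pos hv hij) (dsep_le v hij)
  have htri : ‖v i - v j‖ ≤ ‖u i - v i‖ + ‖u j - v j‖ := by
    rw [norm_sub_rev (u i), hu]
    exact norm_sub_le_norm_sub_add_norm_sub (v i) (u j) (v j)
  calc 1 = ‖v i - v j‖ / ‖v i - v j‖ := (div_self hD.ne').symm
    _ ≤ (‖u i - v i‖ + ‖u j - v j‖) / ‖v i - v j‖ := div_le_div_of_nonneg_right htri hD.le
    _ ≤ _ := by rw [add_div]; exact add_le_add hi hj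

end Separation

theorem distinct_components_of_close_general {K : Type*} [NormedField K] {n : ℕ}
    (u v : Fin n → K) (hv : Function.Injective v)
    (p q : ℝ≥0∞) (hp : 1 ≤ p) (hpq : 1 / p + 1 / q = 1)
    (h : pnorm p (fun j => ‖u j - v j‖ / dsep v j) < 1 / epow 2 q) :
    Function.Injective u := by
  intro i j hu
  by_contra hij
  set a : Fin n → ℝ := fun k => ‖u k - v k‖ / dsep v k
  have hE : 0 < epow 2 q := by rw [epow_eq_rpow]; positivity
  have hHolder := abs_add_abs_le_epow_mul_pnorm hp hpq a hij
  have hsep : 1 ≤ a i + a j := one_le_add_div_dsep_of_eq hv hij hu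
  have hsmall : epow 2 q * pnorm p a < 1 := by
    simpa [hE.ne'] using mul_lt_mul_of_pos_left h hE
  linarith [le_abs_self (a i), le_abs_self (a j)]

/-- If `v ∈ Kⁿ` has pairwise distinct components and
`‖(u−v)/d(v)‖_p < 1/2^{1/q}`, then `u` also has pairwise distinct components. -/
theorem distinct_components_of_close {K : Type*} [NormedField K] {n : ℕ} (hn : 2 ≤ n)
    (u v : Fin n → K) (hv : Function.Injective v)
    (p q : ℝ≥0∞) (hp : 1 ≤ p) (hpq : 1 / p + 1 / q = 1)
    (h : pnorm p (fun j => ‖u j - v j‖ / dsep v j) < 1 / epow 2 q) :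
    Function.Injective u :=
  distinct_components_of_close_general u v hv p q hp hpq h
end

section
/- Let n ≥ 2 and 1 ≤ p ≤ ∞ with conjugate exponent q, and let R = R(n,p) be the unique positive solution of the equation h(t) = 2, where h(t) = (1 + 2^{1/q} t)(1 + t/(n−1)^{1/p})^{n−1}. Then R ≥ n(2^{1/n} − 1)/((n−1)^{1/q} + 2^{1/q}), and this inequality is an equality if and only if n = 2 and p = 1. -/
/-!
Put `a = 2^{1/q}` and `b = (n-1)^{1/p}`, so that the equation reads `(1 + aR)(1 + R/b)^{n-1} = 2`.
AM-GM applied to the factor `1 + aR` and the `n - 1` factors `1 + R/b` gives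
`n 2^{1/n} ≤ n + aR + (n-1)R/b`, and `(n-1)/b = (n-1)^{1/q}` because `1/p + 1/q = 1`.
Equality in AM-GM forces `aR = R/b`, i.e. `2^{1/q}(n-1)^{1/p} = 1`; as both factors are at
least `1`, this means `q = ∞` (that is, `p = 1`) and then `n - 1 = 1`.
-/

open Finset Filter Topology
open scoped ENNReal

lemma epow_pos {a : ℝ} (ha : 0 < a) (p : ℝ≥0∞) : 0 < epow a p := by
  unfold epow; split_ifs <;> positivity

lemma one_le_epow {a : ℝ} (ha : 1 ≤ a) (p : ℝ≥0∞) : 1 ≤ epow a p := by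
  unfold epow; split_ifs
  · rfl
  · exact Real.one_le_rpow ha (by positivity)

@[simp] lemma epow_one (a : ℝ) : epow a 1 = a := by simp [epow]

@[simp] lemma epow_top (a : ℝ) : epow a ⊤ = 1 := by simp [epow]

lemma epow_eq_one_iff {a : ℝ} (ha : 1 < a) {p : ℝ≥0∞} :
    epow a p = 1 ↔ p = 0 ∨ p = ⊤ := by
  unfold epow
  split_ifs with hp
  · simp [hp]
  · have := Real.rpow_right_inj (y := 1 / p.toReal) (z := 0) (by linarith) ha.ne'
    rw [Real.rpow_zero] at this
    rw [this, one_div, inv_eq_zero, ENNReal.toReal_eq_zero_iff]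

lemma epow_mul_epow {a : ℝ} (ha : 0 ≤ a) (p q : ℝ≥0∞) [p.HolderConjugate q] :
    epow a p * epow a q = a := by
  rcases eq_or_ne p ⊤ with rfl | hp
  · simp [(ENNReal.HolderConjugate.eq_top_iff_eq_one ⊤ q).mp rfl]
  rcases eq_or_ne q ⊤ with rfl | hq
  · simp [(ENNReal.HolderConjugate.eq_top_iff_eq_one ⊤ p).mp rfl]
  have hpq := ENNReal.HolderConjugate.toReal_of_ne_top hp hq
  simp only [epow, hp, hq, if_false]
  rw [← Real.rpow_add' ha (by simp [one_div, hpq.inv_add_inv_eq_one]), one_div, one_div,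
    hpq.inv_add_inv_eq_one, Real.rpow_one]

lemma epow_mul_epow_eq_one_iff {a b : ℝ} (ha : 1 < a) (hb : 1 ≤ b) (p q : ℝ≥0∞)
    [p.HolderConjugate q] : epow a q * epow b p = 1 ↔ b = 1 ∧ p = 1 := by
  have hq_eq_one : epow a q = 1 ↔ p = 1 := by
    rw [epow_eq_one_iff ha, or_iff_right (ENNReal.HolderConjugate.ne_zero q p),
      ENNReal.HolderConjugate.eq_top_iff_eq_one q p]
  have h₁ := one_le_epow ha.le q
  have h₂ := one_le_epow hb p
  constructor
  · intro h
    have hq1 : epow a q = 1 := by nlinarith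
    obtain rfl := hq_eq_one.mp hq1
    refine ⟨?_, rfl⟩
    simpa [hq1] using h
  · rintro ⟨rfl, rfl⟩
    simp [hq_eq_one.mpr rfl]

lemma mul_pow_rpow_one_div_succ {u v : ℝ} (hu : 0 ≤ u) (hv : 0 ≤ v) (m : ℕ) :
    (u * v ^ m) ^ (1 / (m + 1 : ℝ)) = u ^ (1 / (m + 1 : ℝ)) * v ^ (m / (m + 1 : ℝ)) := by
  rw [Real.mul_rpow hu (by positivity), ← Real.rpow_natCast, ← Real.rpow_mul hv, mul_one_div]

lemma succ_mul_rpow_le_add {u v : ℝ} (hu : 0 ≤ u) (hv : 0 ≤ v) (m : ℕ) :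
    (m + 1) * (u * v ^ m) ^ (1 / (m + 1 : ℝ)) ≤ u + m * v := by
  have amgm := Real.geom_mean_le_arith_mean2_weighted (w₁ := 1 / (m + 1 : ℝ))
    (w₂ := m / (m + 1 : ℝ)) (by positivity) (by positivity) hu hv (by field_simp; ring)
  rw [← mul_pow_rpow_one_div_succ hu hv] at amgm
  calc _ ≤ (m + 1) * (1 / (m + 1 : ℝ) * u + m / (m + 1 : ℝ) * v) := by gcongr
    _ = u + m * v := by field_simp

lemma succ_mul_rpow_eq_add_iff {u v : ℝ} (hu : 0 ≤ u) (hv : 0 ≤ v) {m : ℕ} (hm : m ≠ 0) :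
    (m + 1) * (u * v ^ m) ^ (1 / (m + 1 : ℝ)) = u + m * v ↔ u = v := by
  rw [← Real.geom_mean_eq_arith_mean2_weighted_iff_of_pos (w₁ := 1 / (m + 1 : ℝ))
    (w₂ := m / (m + 1 : ℝ)) (by positivity) (by positivity) hu hv (by field_simp; ring),
    ← mul_pow_rpow_one_div_succ hu hv]
  constructor <;> intro h
  · field_simp; linarith
  · field_simp at h; linarith

section RadiusBound

variable {m : ℕ} {a b R : ℝ}

lemma succ_mul_two_rpow_sub_one_le_of_mul_pow_eq_two (ha : 0 < a) (hb : 0 < b) (hR : 0 < R)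
    (h : (1 + a * R) * (1 + R / b) ^ m = 2) :
    (m + 1) * (2 ^ (1 / (m + 1 : ℝ)) - 1) ≤ (a + m / b) * R := by
  have amgm := succ_mul_rpow_le_add (by positivity : 0 ≤ 1 + a * R)
    (by positivity : 0 ≤ 1 + R / b) m
  rw [h] at amgm
  linarith [show (a + m / b) * R = a * R + m * (R / b) by ring]

lemma succ_mul_two_rpow_sub_one_eq_iff_of_mul_pow_eq_two (ha : 0 < a) (hb : 0 < b) (hR : 0 < R)
    (hm : m ≠ 0) (h : (1 + a * R) * (1 + R / b) ^ m = 2) :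
    (m + 1) * (2 ^ (1 / (m + 1 : ℝ)) - 1) = (a + m / b) * R ↔ a * b = 1 := by
  have amgm_eq := succ_mul_rpow_eq_add_iff (by positivity : 0 ≤ 1 + a * R)
    (by positivity : 0 ≤ 1 + R / b) hm
  rw [h] at amgm_eq
  have hsum : (a + m / b) * R = a * R + m * (R / b) := by ring
  calc _ ↔ 1 + a * R = 1 + R / b := by
        rw [← amgm_eq]; constructor <;> intro <;> linarith
    _ ↔ a * b = 1 := by
        rw [add_right_inj, eq_div_iff hb.ne', mul_right_comm, mul_left_eq_self₀]
        simp [hR.ne']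

end RadiusBound

theorem weierstrass_second_kind_radius_lower_bound_general {n : ℕ} (hn : 2 ≤ n)
    (p q : ℝ≥0∞) (hpq : 1 / p + 1 / q = 1)
    (R : ℝ) (hR : 0 < R)
    (hhR : (1 + epow 2 q * R) * (1 + R / epow ((n : ℝ) - 1) p) ^ (n - 1) = 2) :
    (n : ℝ) * ((2:ℝ) ^ ((1:ℝ) / (n : ℝ)) - 1) / (epow ((n : ℝ) - 1) q + epow 2 q) ≤ R ∧
    (R = (n : ℝ) * ((2:ℝ) ^ ((1:ℝ) / (n : ℝ)) - 1) / (epow ((n : ℝ) - 1) q + epow 2 q) ↔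
      (n = 2 ∧ p = 1)) := by
  have : p.HolderConjugate q := ENNReal.holderConjugate_iff.mpr (by simpa only [one_div] using hpq)
  obtain ⟨m, rfl⟩ : ∃ m, n = m + 1 := ⟨n - 1, by omega⟩
  have hm : (1 : ℝ) ≤ m := by exact_mod_cast (by omega : 1 ≤ m)
  have ha := epow_pos two_pos q
  have hb := epow_pos (by positivity : (0 : ℝ) < m) p
  have hc : epow m q = m / epow m p := by
    rw [eq_div_iff hb.ne', mul_comm, epow_mul_epow (by positivity)]
  push_cast at hhR ⊢
  simp only [add_sub_cancel_right] at hhR ⊢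
  have hden : epow m q + epow 2 q = epow 2 q + m / epow m p := by rw [hc, add_comm]
  rw [hden, div_le_iff₀' (by positivity), eq_div_iff (by positivity), mul_comm R, eq_comm,
    succ_mul_two_rpow_sub_one_eq_iff_of_mul_pow_eq_two ha hb hR (by omega) hhR,
    epow_mul_epow_eq_one_iff one_lt_two hm]
  exact ⟨succ_mul_two_rpow_sub_one_le_of_mul_pow_eq_two ha hb hR hhR, by norm_cast⟩

/-- lower bound for the unique positive solution `R` of `h(t) = 2`,
where `h(t) = (1 + 2^{1/q}t)(1 + t/(n−1)^{1/p})^{n−1}`: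
`R ≥ n(2^{1/n} − 1)/((n−1)^{1/q} + 2^{1/q})`, with equality iff `n = 2` and `p = 1`. -/
theorem weierstrass_second_kind_radius_lower_bound {n : ℕ} (hn : 2 ≤ n)
    (p q : ℝ≥0∞) (hp : 1 ≤ p) (hpq : 1 / p + 1 / q = 1)
    (R : ℝ) (hR : 0 < R)
    (hhR : (1 + epow 2 q * R) * (1 + R / epow ((n : ℝ) - 1) p) ^ (n - 1) = 2) :
    (n : ℝ) * ((2:ℝ) ^ ((1:ℝ) / (n : ℝ)) - 1) / (epow ((n : ℝ) - 1) q + epow 2 q) ≤ R ∧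
    (R = (n : ℝ) * ((2:ℝ) ^ ((1:ℝ) / (n : ℝ)) - 1) / (epow ((n : ℝ) - 1) q + epow 2 q) ↔
      (n = 2 ∧ p = 1)) :=
  weierstrass_second_kind_radius_lower_bound_general hn p q hpq R hR hhR
end
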